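/- Let g(z) = z + δz^d for |z| > 2 (d ≥ 2 an integer, 0 < δ). For δ sufficiently small (e.g. δ < 2^{-d}), every point w ∈ ℂ has at most d preimages under the full map g (defined as z for |z|≤1, z+δ(|z|-1)z^d for 1<|z|≤2, z+δz^d for |z|>2), and g has degree exactly d in the sense that some value has exactly d preimages. -/

import Mathlib

/-!
Write `g z = z + δ φ(|z|) z^d` with a 1-Lipschitz cutoff `0 ≤ φ ≤ 1`. For small `δ` the
perturbation `δ φ(|z|) z^d` is a contraction on the disc `|z| ≤ 6`, so `g` is injective there,
while for `|z| > 2` the equation `g z = w` says that `z` is a root of `δ X^d + X - w`, which has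
`d` roots with multiplicity.

If `|w| > 3`, every preimage of `w` lies in `|z| > 2`, so the fibre is exactly the root set;
taking `w` outside the finitely many critical values of `z + δ z^d` makes the roots simple, and
the fibre has exactly `d` points. If `|w| ≤ 3`, the product formula `∏ |ρ| = |w| / δ` forces a
root `ρ` with `|ρ| ≤ 6`; the preimages in the disc `|z| ≤ 6` collapse to a single point, which
takes the place of `ρ`, so the fibre still has at most `d` points.
-/

open Complex Set

/-- The map `g`: identity on the closed unit disc, `z + δ(|z|-1)z^d` for `1 < |z| ≤ 2`,
and `z + δ z^d` for `|z| > 2`. -/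
noncomputable def g (δ : ℝ) (d : ℕ) (z : ℂ) : ℂ :=
  if ‖z‖ ≤ 1 then z
  else if ‖z‖ ≤ 2 then z + δ * (‖z‖ - 1) * z ^ d
  else z + δ * z ^ d

open Polynomial

noncomputable def cutoff (t : ℝ) : ℝ := max (min (t - 1) 1) 0

lemma cutoff_nonneg (t : ℝ) : 0 ≤ cutoff t := le_max_right _ _

lemma cutoff_le_one (t : ℝ) : cutoff t ≤ 1 := max_le (min_le_right _ _) zero_le_one

lemma abs_cutoff_sub_cutoff_le (s t : ℝ) : |cutoff s - cutoff t| ≤ |s - t| :=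
  calc |cutoff s - cutoff t| ≤ |min (s - 1) 1 - min (t - 1) 1| := abs_max_sub_max_le_abs _ _ _
    _ ≤ |s - t| := by simpa using abs_min_sub_min_le_max (s - 1) 1 (t - 1) 1

lemma g_eq_add_cutoff (δ : ℝ) (d : ℕ) (z : ℂ) : g δ d z = z + δ * cutoff ‖z‖ * z ^ d := by
  unfold g cutoff
  split_ifs with h₁ h₂
  · rw [max_eq_right (min_le_of_left_le (by linarith))]
    simp
  · rw [min_eq_left (by linarith), max_eq_left (by linarith)]
    push_cast; ring
  · rw [min_eq_right (by linarith), max_eq_left zero_le_one]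
    simp

lemma g_of_two_lt_norm {δ : ℝ} {d : ℕ} {z : ℂ} (hz : 2 < ‖z‖) : g δ d z = z + δ * z ^ d := by
  simp [g, hz.not_ge, (one_lt_two.trans hz).not_ge]

lemma norm_pow_sub_pow_le {𝕜 : Type*} [NormedField 𝕜] {R : ℝ} {x y : 𝕜} (hx : ‖x‖ ≤ R)
    (hy : ‖y‖ ≤ R) (n : ℕ) : ‖x ^ n - y ^ n‖ ≤ n * R ^ (n - 1) * ‖x - y‖ := by
  have hR : 0 ≤ R := (norm_nonneg x).trans hx
  rw [← geom_sum₂_mul, norm_mul]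
  gcongr
  calc ‖∑ i ∈ Finset.range n, x ^ i * y ^ (n - 1 - i)‖
      ≤ ∑ i ∈ Finset.range n, ‖x‖ ^ i * ‖y‖ ^ (n - 1 - i) := by
        simpa only [norm_mul, norm_pow] using
          norm_sum_le (Finset.range n) fun i => x ^ i * y ^ (n - 1 - i)
    _ ≤ ∑ _i ∈ Finset.range n, R ^ (n - 1) := Finset.sum_le_sum fun i hi => by
        have hi : i ≤ n - 1 := by simp only [Finset.mem_range] at hi; omega
        calc ‖x‖ ^ i * ‖y‖ ^ (n - 1 - i) ≤ R ^ i * R ^ (n - 1 - i) := by gcongr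
          _ = R ^ (n - 1) := by rw [← pow_add, Nat.add_sub_cancel' hi]
    _ = n * R ^ (n - 1) := by simp

lemma norm_cutoff_mul_pow_sub_le {R : ℝ} {z₁ z₂ : ℂ} (h₁ : ‖z₁‖ ≤ R) (h₂ : ‖z₂‖ ≤ R) (d : ℕ) :
    ‖(cutoff ‖z₁‖ : ℂ) * z₁ ^ d - cutoff ‖z₂‖ * z₂ ^ d‖ ≤
      (R ^ d + d * R ^ (d - 1)) * ‖z₁ - z₂‖ := by
  have hc : ‖(cutoff ‖z₁‖ - cutoff ‖z₂‖ : ℂ)‖ ≤ ‖z₁ - z₂‖ := by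
    rw [← ofReal_sub, norm_real, Real.norm_eq_abs]
    exact (abs_cutoff_sub_cutoff_le _ _).trans (abs_norm_sub_norm_le _ _)
  have hc₂ : ‖(cutoff ‖z₂‖ : ℂ)‖ ≤ 1 := by
    rw [norm_real, Real.norm_of_nonneg (cutoff_nonneg _)]
    exact cutoff_le_one _
  calc ‖(cutoff ‖z₁‖ : ℂ) * z₁ ^ d - cutoff ‖z₂‖ * z₂ ^ d‖
      = ‖(cutoff ‖z₁‖ - cutoff ‖z₂‖ : ℂ) * z₁ ^ d + cutoff ‖z₂‖ * (z₁ ^ d - z₂ ^ d)‖ := by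
        ring_nf
    _ ≤ ‖z₁ - z₂‖ * R ^ d + 1 * (d * R ^ (d - 1) * ‖z₁ - z₂‖) := by
        refine (norm_add_le _ _).trans ?_
        rw [norm_mul, norm_mul, norm_pow]
        gcongr
        exact norm_pow_sub_pow_le h₁ h₂ d
    _ = (R ^ d + d * R ^ (d - 1)) * ‖z₁ - z₂‖ := by ring

lemma injOn_add_of_norm_sub_le {E : Type*} [NormedAddCommGroup E] {f : E → E} {s : Set E}
    {K : ℝ} (hK : K < 1) (hf : ∀ x ∈ s, ∀ y ∈ s, ‖f x - f y‖ ≤ K * ‖x - y‖) :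
    InjOn (fun x => x + f x) s := by
  intro x hx y hy hxy
  have h : ‖x - y‖ ≤ K * ‖x - y‖ :=
    calc ‖x - y‖ = ‖f y - f x‖ := by rw [sub_eq_sub_iff_add_eq_add.2 (hxy.trans (add_comm _ _))]
      _ ≤ K * ‖x - y‖ := by rw [norm_sub_rev x]; exact hf y hy x hx
  exact sub_eq_zero.1 (norm_le_zero_iff.1 (by nlinarith [norm_nonneg (x - y)]))

lemma injOn_g_closedBall {δ R : ℝ} {d : ℕ} (hδ : 0 < δ) (h : δ * (R ^ d + d * R ^ (d - 1)) < 1) :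
    InjOn (g δ d) (Metric.closedBall 0 R) := by
  have hg : g δ d = fun z : ℂ => z + δ * (cutoff ‖z‖ * z ^ d) := by
    funext z
    rw [g_eq_add_cutoff, mul_assoc]
  rw [hg]
  refine injOn_add_of_norm_sub_le h fun z₁ h₁ z₂ h₂ => ?_
  rw [mem_closedBall_zero_iff] at h₁ h₂
  rw [← mul_sub, norm_mul, norm_real, Real.norm_of_nonneg hδ.le, mul_assoc]
  exact mul_le_mul_of_nonneg_left (norm_cutoff_mul_pow_sub_le h₁ h₂ d) hδ.le

lemma norm_add_mul_pow_le_three {c z : ℂ} {d : ℕ} (hc : ‖c‖ * 2 ^ d ≤ 1) (hz : ‖z‖ ≤ 2) :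
    ‖z + c * z ^ d‖ ≤ 3 :=
  calc ‖z + c * z ^ d‖ ≤ ‖z‖ + ‖c‖ * ‖z‖ ^ d := by
        simpa only [norm_mul, norm_pow] using norm_add_le z (c * z ^ d)
    _ ≤ 2 + ‖c‖ * 2 ^ d := by gcongr
    _ ≤ 3 := by linarith

lemma norm_g_le_three {δ : ℝ} {d : ℕ} {z : ℂ} (hδ : 0 < δ) (h : δ * 2 ^ d ≤ 1) (hz : ‖z‖ ≤ 2) :
    ‖g δ d z‖ ≤ 3 := by
  rw [g_eq_add_cutoff]
  refine norm_add_mul_pow_le_three ?_ hz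
  rw [norm_mul, norm_real, norm_real, Real.norm_of_nonneg hδ.le,
    Real.norm_of_nonneg (cutoff_nonneg _)]
  calc δ * cutoff ‖z‖ * 2 ^ d ≤ δ * 1 * 2 ^ d := by gcongr; exact cutoff_le_one _
    _ ≤ 1 := by rwa [mul_one]

lemma infinite_setOf_lt_norm (r : ℝ) : {w : ℂ | r < ‖w‖}.Infinite := by
  refine ((Ioi_infinite r).image ofReal_injective.injOn).mono ?_
  rintro _ ⟨x, hx, rfl⟩
  exact (mem_Ioi.1 hx).trans_le (by rw [norm_real, Real.norm_eq_abs]; exact le_abs_self x)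

noncomputable def outerPoly (δ : ℝ) (d : ℕ) (w : ℂ) : ℂ[X] := C (δ : ℂ) * X ^ d + X - C w

section outerPoly

variable {δ : ℝ} {d : ℕ} {w z : ℂ}

lemma isRoot_outerPoly : (outerPoly δ d w).IsRoot z ↔ z + δ * z ^ d = w := by
  simp [outerPoly, sub_eq_zero, add_comm]

lemma outerPoly_ne_zero (hd : 2 ≤ d) : outerPoly δ d w ≠ 0 := by
  intro h
  have := congrArg (coeff · 1) h
  simp [outerPoly, coeff_X, coeff_X_pow, show 1 ≠ d by omega] at this

lemma natDegree_outerPoly (hδ : δ ≠ 0) (hd : 2 ≤ d) : (outerPoly δ d w).natDegree = d := by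
  unfold outerPoly
  compute_degree!
  · simp [hδ, show 1 ≠ d by omega, show d ≠ 0 by omega]
  · omega

lemma leadingCoeff_outerPoly (hδ : δ ≠ 0) (hd : 2 ≤ d) : (outerPoly δ d w).leadingCoeff = δ := by
  rw [leadingCoeff, natDegree_outerPoly hδ hd]
  simp [outerPoly, coeff_X, coeff_C, show 1 ≠ d by omega, show d ≠ 0 by omega]

lemma card_roots_outerPoly (hδ : δ ≠ 0) (hd : 2 ≤ d) :
    Multiset.card (outerPoly δ d w).roots = d := by
  rw [IsAlgClosed.card_roots_eq_natDegree, natDegree_outerPoly hδ hd]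

lemma prod_norm_roots_outerPoly (hδ : 0 < δ) (hd : 2 ≤ d) :
    ((outerPoly δ d w).roots.map (‖·‖)).prod = ‖w‖ / δ := by
  have h := (IsAlgClosed.splits (outerPoly δ d w)).coeff_zero_eq_leadingCoeff_mul_prod_roots
  rw [leadingCoeff_outerPoly hδ.ne' hd] at h
  have h0 : (outerPoly δ d w).coeff 0 = -w := by
    simp [outerPoly, coeff_X, coeff_C, show 0 ≠ d by omega]
  have := congrArg (‖·‖) (h0.symm.trans h)
  simp only [norm_neg, norm_mul, norm_pow, norm_one, one_pow, one_mul, norm_real,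
    Real.norm_of_nonneg hδ.le] at this
  rw [eq_div_iff hδ.ne', this, mul_comm]
  exact congrArg _ (map_multiset_prod (normHom : ℂ →*₀ ℝ) _).symm

lemma exists_root_outerPoly_norm_le (hδ : 0 < δ) (hd : 2 ≤ d) {r : ℝ} (hw : ‖w‖ ≤ r)
    (hr : 2 * δ * (2 * r) ^ (d - 1) < 1) :
    ∃ ρ, (outerPoly δ d w).IsRoot ρ ∧ ‖ρ‖ ≤ 2 * r := by
  by_contra! hbig
  have hlarge : ∀ ρ ∈ (outerPoly δ d w).roots, 1 / (2 * δ) ≤ ‖ρ‖ ^ (d - 1) := by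
    intro ρ hρ
    have hroot := (mem_roots'.1 hρ).2
    have hρr := hbig ρ hroot
    have hρ0 : 0 < ‖ρ‖ := lt_of_le_of_lt (by linarith [norm_nonneg w]) hρr
    have hnorm : δ * ‖ρ‖ ^ d = ‖w - ρ‖ := by
      rw [← isRoot_outerPoly.1 hroot, add_sub_cancel_left, norm_mul, norm_pow, norm_real,
        Real.norm_of_nonneg hδ.le]
    have hhalf : ‖ρ‖ / 2 ≤ δ * ‖ρ‖ ^ (d - 1) * ‖ρ‖ := by
      calc ‖ρ‖ / 2 ≤ ‖ρ‖ - ‖w‖ := by linarith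
        _ ≤ ‖w - ρ‖ := by rw [norm_sub_rev]; exact norm_sub_norm_le ρ w
        _ = δ * ‖ρ‖ ^ (d - 1) * ‖ρ‖ := by
          rw [← hnorm, mul_assoc, ← pow_succ, Nat.sub_add_cancel (by omega)]
    rw [div_le_iff₀ (by positivity)]
    nlinarith
  have hprod : (1 / (2 * δ)) ^ d ≤ (r / δ) ^ (d - 1) :=
    calc (1 / (2 * δ)) ^ d
        = ((outerPoly δ d w).roots.map fun _ => 1 / (2 * δ)).prod := by
          rw [Multiset.map_const', Multiset.prod_replicate, card_roots_outerPoly hδ.ne' hd]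
      _ ≤ ((outerPoly δ d w).roots.map fun ρ => ‖ρ‖ ^ (d - 1)).prod :=
          Multiset.prod_map_le_prod_map₀ _ _ (fun _ _ => by positivity) hlarge
      _ = (‖w‖ / δ) ^ (d - 1) := by
          rw [Multiset.prod_map_pow, prod_norm_roots_outerPoly hδ hd]
      _ ≤ (r / δ) ^ (d - 1) := by gcongr
  obtain ⟨n, rfl⟩ : ∃ n, d = n + 1 := ⟨d - 1, by omega⟩
  rw [Nat.add_sub_cancel] at hr hprod
  rw [div_pow, one_pow, div_le_iff₀ (by positivity)] at hprod
  have : (r / δ) ^ n * (2 * δ) ^ (n + 1) = 2 * δ * (2 * r) ^ n := by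
    rw [pow_succ, ← mul_assoc, ← mul_pow, mul_comm]
    congr 2
    field_simp
  linarith

noncomputable def criticalValues (δ : ℝ) (d : ℕ) : Finset ℂ :=
  (derivative (outerPoly δ d 0)).roots.toFinset.image fun z => z + δ * z ^ d

lemma nodup_roots_outerPoly (hd : 2 ≤ d) (hw : w ∉ criticalValues δ d) :
    (outerPoly δ d w).roots.Nodup := by
  classical
  refine Multiset.nodup_iff_count_le_one.2 fun z => ?_
  rw [count_roots]
  by_contra! hmult
  obtain ⟨hroot, hcrit⟩ := (one_lt_rootMultiplicity_iff_isRoot (outerPoly_ne_zero hd)).1 hmult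
  have hderiv : derivative (outerPoly δ d w) = derivative (outerPoly δ d 0) := by
    simp [outerPoly]
  have hderiv_ne : derivative (outerPoly δ d 0) ≠ 0 := by
    intro h
    have := congrArg (eval 0) h
    simp [outerPoly, derivative_X_pow, show d - 1 ≠ 0 by omega] at this
  rw [hderiv] at hcrit
  exact hw (Finset.mem_image.2 ⟨z, Multiset.mem_toFinset.2 (mem_roots'.2 ⟨hderiv_ne, hcrit⟩),
    isRoot_outerPoly.1 hroot⟩)

end outerPoly

section fibre

variable {δ : ℝ} {d : ℕ}

lemma preimage_g_eq_roots (hδ : 0 < δ) (hd : 2 ≤ d) (h2 : δ * 2 ^ d ≤ 1) {w : ℂ}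
    (hw : 3 < ‖w‖) : g δ d ⁻¹' {w} = (outerPoly δ d w).roots.toFinset := by
  ext z
  simp only [mem_preimage, mem_singleton_iff, Finset.mem_coe, Multiset.mem_toFinset, mem_roots',
    ne_eq, outerPoly_ne_zero hd, not_false_eq_true, true_and, isRoot_outerPoly]
  constructor
  · intro hz
    have h2z : 2 < ‖z‖ := lt_of_not_ge fun h => (norm_g_le_three hδ h2 h).not_gt (hz ▸ hw)
    rwa [← g_of_two_lt_norm h2z]
  · intro hz
    have hδ2 : ‖(δ : ℂ)‖ * 2 ^ d ≤ 1 := by rwa [norm_real, Real.norm_of_nonneg hδ.le]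
    have h2z : 2 < ‖z‖ :=
      lt_of_not_ge fun h => (norm_add_mul_pow_le_three hδ2 h).not_gt (hz ▸ hw)
    rwa [g_of_two_lt_norm h2z]

lemma finite_preimage_g_and_ncard_le (hδ : 0 < δ) (hd : 2 ≤ d) (h2 : δ * 2 ^ d ≤ 1)
    (hinj : δ * (6 ^ d + d * 6 ^ (d - 1)) < 1) (hroot : 2 * δ * 6 ^ (d - 1) < 1) (w : ℂ) :
    (g δ d ⁻¹' {w}).Finite ∧ Nat.card (g δ d ⁻¹' {w}) ≤ d := by
  classical
  set F := g δ d ⁻¹' {w}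
  set S := (outerPoly δ d w).roots.toFinset
  suffices ∃ f : ℂ → ℂ, MapsTo f F S ∧ InjOn f F by
    obtain ⟨f, hmaps, hf⟩ := this
    refine ⟨Finite.of_injOn hmaps hf S.finite_toSet, ?_⟩
    calc Nat.card F = F.ncard := Nat.card_coe_set_eq F
      _ ≤ (S : Set ℂ).ncard := ncard_le_ncard_of_injOn f hmaps hf S.finite_toSet
      _ = S.card := ncard_coe_finset S
      _ ≤ d := (Multiset.toFinset_card_le _).trans (card_roots_outerPoly hδ.ne' hd).le
  rcases lt_or_ge 3 ‖w‖ with hw | hw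
  · exact ⟨id, fun z hz => preimage_g_eq_roots hδ hd h2 hw ▸ hz, injOn_id F⟩
  obtain ⟨ρ, hρ, hρ6⟩ := exists_root_outerPoly_norm_le hδ hd hw (by norm_num [hroot])
  norm_num at hρ6
  have hg6 := injOn_g_closedBall (R := 6) hδ hinj
  refine ⟨fun z => if ‖z‖ ≤ 6 then ρ else z, fun z hz => ?_, fun z₁ h₁ z₂ h₂ h => ?_⟩
  · simp only [S, Finset.mem_coe, Multiset.mem_toFinset, mem_roots', ne_eq,
      outerPoly_ne_zero hd, not_false_eq_true, true_and]
    split_ifs with h6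
    · exact hρ
    · rw [isRoot_outerPoly, ← g_of_two_lt_norm (by linarith)]
      exact hz
  · dsimp only at h
    split_ifs at h with hz₁ hz₂ hz₂
    · exact hg6 (mem_closedBall_zero_iff.2 hz₁) (mem_closedBall_zero_iff.2 hz₂) (h₁.trans h₂.symm)
    · exact absurd (h ▸ hρ6) hz₂
    · exact absurd (h ▸ hρ6) hz₁
    · exact h

lemma exists_ncard_preimage_g_eq (hδ : 0 < δ) (hd : 2 ≤ d) (h2 : δ * 2 ^ d ≤ 1) :
    ∃ w, Nat.card (g δ d ⁻¹' {w}) = d := by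
  classical
  obtain ⟨w, hw, hwc⟩ := (infinite_setOf_lt_norm 3).exists_notMem_finset (criticalValues δ d)
  refine ⟨w, ?_⟩
  rw [preimage_g_eq_roots hδ hd h2 hw, Nat.card_coe_set_eq, ncard_coe_finset,
    Multiset.toFinset_card_of_nodup (nodup_roots_outerPoly hd hwc), card_roots_outerPoly hδ.ne' hd]

end fibre

theorem stmt11 (d : ℕ) (hd : 2 ≤ d) :
    ∃ δ₀ : ℝ, 0 < δ₀ ∧ ∀ δ : ℝ, 0 < δ → δ < δ₀ →
      (∀ w : ℂ, (g δ d ⁻¹' {w}).Finite ∧ Nat.card (g δ d ⁻¹' {w}) ≤ d) ∧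
      (∃ w : ℂ, Nat.card (g δ d ⁻¹' {w}) = d) := by
  refine ⟨1 / ((d + 1) * 6 ^ d), by positivity, fun δ hδ hδ₀ => ?_⟩
  have hsmall : δ * ((d + 1) * 6 ^ d) < 1 := by rwa [lt_div_iff₀ (by positivity)] at hδ₀
  have h3 : 3 * (δ * 6 ^ d) < 1 :=
    calc 3 * (δ * 6 ^ d) ≤ (d + 1) * (δ * 6 ^ d) := by
          gcongr
          linarith [show (2 : ℝ) ≤ d by exact_mod_cast hd]
      _ < 1 := by linarith
  have h2 : δ * 2 ^ d ≤ 1 := by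
    have : δ * 2 ^ d ≤ δ * 6 ^ d := by gcongr; norm_num
    linarith
  have h66 : δ * 6 ^ (d - 1) ≤ δ * 6 ^ d := by gcongr <;> norm_num
  have hinj : δ * (6 ^ d + d * 6 ^ (d - 1)) < 1 := by
    have : δ * (d * 6 ^ (d - 1)) ≤ δ * (d * 6 ^ d) := by gcongr <;> norm_num
    linarith
  have hroot : 2 * δ * 6 ^ (d - 1) < 1 := by linarith
  exact ⟨finite_preimage_g_and_ncard_le hδ hd h2 hinj hroot, exists_ncard_preimage_g_eq hδ hd h2⟩
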